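/- For 0 ≤ j < n!, write j = ∑_{i=2}^n j_i · n!/i! with 0 ≤ j_i < i for all i (this representation exists and is unique); then the (j+1)-th permutation to appear as a contiguous substring of M_n is p_2^{j_2} ∘ p_3^{j_3} ∘ ⋯ ∘ p_n^{j_n}. -/

import Mathlib

def pcyc (k : ℕ) : Equiv.Perm ℕ := (List.range' 1 k).formPerm

/-- The ordered composition `p_2^{e 2} ∘ p_3^{e 3} ∘ ⋯ ∘ p_n^{e n}`. -/
def circProd (n : ℕ) (e : ℕ → ℕ) : Equiv.Perm ℕ :=
  ((List.range' 2 (n - 1)).map fun i => (pcyc i) ^ (e i)).prod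

/-- All length-`n` windows of `s`. -/
def windows (n : ℕ) (s : List ℕ) : List (List ℕ) :=
  (List.range (s.length + 1 - n)).map fun i => (s.drop i).take n

/-- The permutations of `{1,…,n}` in order of first appearance as substrings of `s`. -/
def permsOrder (n : ℕ) (s : List ℕ) : List (List ℕ) :=
  (((windows n s).filter fun w => decide (w.Perm (List.range' 1 n))).reverse.dedup).reverse

/-- Length of the maximal overlap: the longest suffix of `s` that is a prefix of `t`. -/
def ov (s t : List ℕ) : ℕ :=
  ((List.range (min s.length t.length + 1)).filter fun l => (t.take l).isSuffixOf s).foldr max 0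

/-- Concatenate with maximal overlap. -/
def mergeOv (s t : List ℕ) : List ℕ := s ++ t.drop (ov s t)

/-- The recursively constructed superpermutation `M_n`. -/
def Mrec : ℕ → List ℕ
  | 0 => []
  | 1 => [1]
  | n + 2 =>
      ((permsOrder (n + 1) (Mrec (n + 1))).map fun P => P ++ [n + 2] ++ P).foldl mergeOv []

/-!
In `M_{n+1}` every window of length `n+1` that is a permutation lies inside one block
`Q_P = P ++ [n+1] ++ P`: the string built before `Q_P` ends with the previous permutation
`P' ≠ P`, so it overlaps `Q_P` in at most `n` letters, and a window straddling the junction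
misses the letter `n+1`. The windows of `Q_P` are the rotations of `P ++ [n+1]`, and rotations
coming from different `P` are different. So the permutations of `M_{n+1}`, in order, are the
rotations of `P ++ [n+1]` by `0, …, n`, for `P` running through those of `M_n` in order.
Rotating by `u` is composing with `p_{n+1}^u`, and `j = (n+1) j' + j_{n+1}`, which gives the
statement by induction on `n`.
-/

open List
open scoped Nat

def permWindows (k : ℕ) (s : List ℕ) : List (List ℕ) :=
  (windows k s).filter fun w => decide (w.Perm (range' 1 k))

lemma permsOrder_eq_permWindows {n : ℕ} {s : List ℕ} (h : (permWindows n s).Nodup) :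
    permsOrder n s = permWindows n s := by
  rw [permsOrder, ← permWindows, (nodup_reverse.mpr h).dedup, reverse_reverse]

lemma perm_of_mem_permsOrder {n : ℕ} {s w : List ℕ} (h : w ∈ permsOrder n s) :
    w ~ range' 1 n := by
  simpa [permsOrder] using (mem_filter.mp (mem_reverse.mp (mem_dedup.mp (mem_reverse.mp h)))).2

lemma windows_append {k : ℕ} (hk : 1 ≤ k) (A B : List ℕ) :
    windows k (A ++ B) = windows k A ++ windows k (A.drop (A.length + 1 - k) ++ B) := by
  rcases Nat.lt_or_ge (A.length + 1) k with h | h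
  · have h0 : A.length + 1 - k = 0 := by omega
    simp [windows, h0]
  · have len1 : (A ++ B).length + 1 - k = (A.length + 1 - k) + B.length := by
      simp only [length_append]; omega
    have len2 : (A.drop (A.length + 1 - k) ++ B).length + 1 - k = B.length := by
      simp only [length_append, length_drop]; omega
    rw [windows, windows, windows, len1, len2, range_add, map_append, map_map]
    congr 1
    · refine map_congr_left fun i hi => ?_
      have hi' : i < A.length + 1 - k := mem_range.mp hi
      rw [drop_append_of_le_length (by omega), take_append_of_le_length (by simp; omega)]
    · refine map_congr_left fun i _ => ?_
      simp only [Function.comp_apply]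
      rw [← drop_drop, drop_append_of_le_length (by omega)]

lemma windows_append_of_le_length {k : ℕ} (C Q : List ℕ) (h : k ≤ Q.length) :
    windows k (C ++ Q) = (range C.length).map (fun i => (C.drop i ++ Q).take k) ++ windows k Q := by
  have len : (C ++ Q).length + 1 - k = C.length + (Q.length + 1 - k) := by
    simp only [length_append]; omega
  rw [windows, windows, len, range_add, map_append, map_map]
  congr 1
  · refine map_congr_left fun i hi => ?_
    rw [drop_append_of_le_length (mem_range.mp hi).le]
  · refine map_congr_left fun i _ => ?_
    simp only [Function.comp_apply]
    rw [drop_append, drop_eq_nil_of_le (by omega), nil_append, Nat.add_sub_cancel_left]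

lemma windows_length_append_dropLast (l : List ℕ) :
    windows l.length (l ++ l.dropLast) = l.cyclicPermutations := by
  rcases eq_or_ne l [] with rfl | hl
  · rfl
  have hpos : 0 < l.length := length_pos_iff.mpr hl
  refine ext_getElem (by simp [windows, hl]; omega) fun i h₁ h₂ => ?_
  have hi : i < l.length := by simpa [hl] using h₂
  simp only [windows, getElem_map, getElem_range, getElem_cyclicPermutations,
    rotate_eq_drop_append_take hi.le, drop_append_of_le_length hi.le, take_append, length_drop,
    dropLast_eq_take, take_take]
  rw [take_of_length_le (by simp), show l.length - (l.length - i) = i by omega,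
    min_eq_left (by omega)]

lemma ov_mem (s t : List ℕ) :
    ov s t ∈ (range (min s.length t.length + 1)).filter fun l => (t.take l).isSuffixOf s := by
  set l := (range (min s.length t.length + 1)).filter fun l => (t.take l).isSuffixOf s
  have hl : l ≠ [] := ne_nil_of_mem (a := 0) (by simp [l])
  exact maximum_mem (foldr_max_of_ne_nil hl).symm

lemma ov_le_min (s t : List ℕ) : ov s t ≤ min s.length t.length :=
  Nat.lt_succ_iff.mp (mem_range.mp (mem_filter.mp (ov_mem s t)).1)

lemma take_ov_suffix (s t : List ℕ) : t.take (ov s t) <:+ s :=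
  isSuffixOf_iff_suffix.mp (mem_filter.mp (ov_mem s t)).2

lemma mergeOv_eq_take_append (s t : List ℕ) : mergeOv s t = s.take (s.length - ov s t) ++ t := by
  have hlen : (t.take (ov s t)).length = ov s t :=
    length_take_of_le ((ov_le_min s t).trans (min_le_right _ _))
  have hs := (suffix_iff_eq_drop.mp (take_ov_suffix s t)).trans (by rw [hlen])
  rw [mergeOv]
  nth_rewrite 1 [← take_append_drop (s.length - ov s t) s]
  rw [← hs, append_assoc, take_append_drop]

lemma ov_le_of_rtake {n : ℕ} {S P : List ℕ} (hP : P.length = n) (hS : n + 1 ∉ S.rtake n)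
    (hSP : S.rtake n ≠ P) : ov S (P ++ [n + 1] ++ P) ≤ n := by
  set Q := P ++ [n + 1] ++ P
  set o := ov S Q
  have hQ : Q.length = 2 * n + 1 := by simp [Q, hP]; omega
  have ho := ov_le_min S Q
  by_contra! hno
  have hT : Q.take o = S.drop (S.length - o) := by
    have h := suffix_iff_eq_drop.mp (take_ov_suffix S Q)
    rwa [length_take_of_le (by omega)] at h
  have hrtake : S.rtake n = (Q.take o).drop (o - n) := by
    rw [hT, drop_drop, rtake]; congr 1; omega
  rcases Nat.lt_or_ge o (2 * n + 1) with ho' | ho'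
  · refine hS (hrtake ▸ mem_iff_getElem.mpr ⟨2 * n - o, by simp; omega, ?_⟩)
    simp [Q, hP, show o - n + (2 * n - o) = n by omega]
  · refine hSP ?_
    rw [hrtake, take_of_length_le (by omega),
      show o - n = (P ++ [n + 1]).length by simp [hP]; omega]
    exact drop_left

lemma range'_one_succ (n : ℕ) : range' 1 (n + 1) = range' 1 n ++ [n + 1] := by
  rw [range'_concat, Nat.one_mul, Nat.add_comm 1 n]

lemma succ_notMem_of_perm_range' {n : ℕ} {P : List ℕ} (hP : P ~ range' 1 n) : n + 1 ∉ P := by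
  simp [hP.mem_iff, Nat.add_comm]

lemma permWindows_mergeOv {n : ℕ} {S P : List ℕ} (hP : P ~ range' 1 n)
    (hS : n + 1 ∉ S.rtake n) (hSP : S.rtake n ≠ P) :
    permWindows (n + 1) (mergeOv S (P ++ [n + 1] ++ P)) =
      permWindows (n + 1) S ++ (P ++ [n + 1]).cyclicPermutations := by
  have hPlen : P.length = n := by simpa using hP.length_eq
  set Q := P ++ [n + 1] ++ P
  set T := S.rtake n
  set C := T.take (T.length - ov S Q)
  have ho : ov S Q ≤ n := ov_le_of_rtake hPlen hS hSP
  have hoS : ov S Q ≤ S.length := (ov_le_min S Q).trans (min_le_left _ _)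
  have hTlen : T.length = min n S.length := by simp [T, rtake]; omega
  have hQlen : Q.length = 2 * n + 1 := by simp [Q, hPlen]; omega
  have hQT : Q.take (ov S Q) = T.drop (T.length - ov S Q) := by
    have hsuf : Q.take (ov S Q) <:+ T :=
      suffix_of_suffix_length_le (take_ov_suffix S Q) (drop_suffix _ S) (by simp; omega)
    simpa [length_take_of_le (show ov S Q ≤ Q.length by omega)] using suffix_iff_eq_drop.mp hsuf
  have hTQ : T ++ Q.drop (ov S Q) = C ++ Q := by
    conv_lhs => rw [← take_append_drop (T.length - ov S Q) T]
    rw [← hQT, append_assoc, take_append_drop]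
  have hcyc : windows (n + 1) Q = (P ++ [n + 1]).cyclicPermutations := by
    simpa [hPlen, Q] using windows_length_append_dropLast (P ++ [n + 1])
  -- a window straddling the junction takes at most `n` letters of `Q`, all from `P`
  have hstraddle : ∀ i < C.length, n + 1 ∉ (C.drop i ++ Q).take (n + 1) := by
    intro i hi hmem
    rw [take_append, mem_append] at hmem
    rcases hmem with h | h
    · exact hS (mem_of_mem_take (mem_of_mem_drop (mem_of_mem_take h)))
    · have h' : n + 1 ∈ Q.take n := take_subset_take_left Q (by simp; omega) h
      rw [show Q.take n = P by simp only [Q, append_assoc]; exact take_left' hPlen] at h'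
      exact succ_notMem_of_perm_range' hP h'
  rw [permWindows, mergeOv, windows_append (by omega) S,
    show S.length + 1 - (n + 1) = S.length - n by omega, show S.drop (S.length - n) = T from rfl,
    hTQ, windows_append_of_le_length C Q (by omega),
    filter_append, filter_append, hcyc, ← permWindows]
  congr 1
  rw [filter_eq_nil_iff.mpr, nil_append, filter_eq_self.mpr]
  · intro w hw
    have hrot := (mem_cyclicPermutations_iff.mp hw).perm
    simpa [range'_one_succ] using hrot.trans (hP.append_right [n + 1])
  · simp only [mem_map, mem_range, decide_eq_true_eq, forall_exists_index, and_imp]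
    rintro w i hi rfl hperm
    exact hstraddle i hi (hperm.mem_iff.mpr (by simp))

lemma rtake_mergeOv_append_singleton_append (S P : List ℕ) (x : ℕ) :
    (mergeOv S (P ++ [x] ++ P)).rtake P.length = P := by
  rw [mergeOv_eq_take_append, ← append_assoc, rtake, length_append, Nat.add_sub_cancel, drop_left]

lemma permWindows_foldl_mergeOv {n : ℕ} (l : List (List ℕ)) (hl : l.Nodup)
    (hperm : ∀ P ∈ l, P ~ range' 1 n) (S : List ℕ) (hS : n + 1 ∉ S.rtake n)
    (hSl : S.rtake n ∉ l) :
    permWindows (n + 1) (l.foldl (fun s P => mergeOv s (P ++ [n + 1] ++ P)) S) =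
      permWindows (n + 1) S ++ l.flatMap fun P => (P ++ [n + 1]).cyclicPermutations := by
  induction l generalizing S with
  | nil => simp
  | cons P l ih =>
    have hP := hperm P mem_cons_self
    have hrtake : (mergeOv S (P ++ [n + 1] ++ P)).rtake n = P := by
      simpa [hP.length_eq] using rtake_mergeOv_append_singleton_append S P (n + 1)
    rw [foldl_cons, ih (nodup_cons.mp hl).2 (fun Q hQ => hperm Q (mem_cons_of_mem _ hQ)) _
      (by rw [hrtake]; exact succ_notMem_of_perm_range' hP)
      (by rw [hrtake]; exact (nodup_cons.mp hl).1),
      permWindows_mergeOv hP hS (fun h => hSl (h ▸ mem_cons_self)), flatMap_cons, append_assoc]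

lemma eq_of_isRotated_append_singleton {α : Type*} {P P' : List α} {x : α} (hx : x ∉ P)
    (h : P ++ [x] ~r P' ++ [x]) : P = P' := by
  obtain ⟨k, hk, hrot⟩ := isRotated_iff_mod.mp h
  rw [length_append, length_singleton] at hk
  rcases Nat.eq_zero_or_pos k with rfl | hk0
  · simpa using hrot
  rcases hk.lt_or_eq with hk' | rfl
  · obtain ⟨T, y, hTy⟩ : ∃ T y, P.take k = T ++ [y] :=
      (eq_nil_or_concat' (P.take k)).resolve_left (ne_nil_of_length_pos (by simp; omega))
    rw [rotate_eq_drop_append_take (by simp; omega), take_append_of_le_length (by omega), hTy,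
      ← append_assoc] at hrot
    have hyx : y = x := singleton_inj.mp (append_inj' hrot rfl).2
    exact absurd (mem_of_mem_take (hTy ▸ mem_append_right T (mem_singleton_self y))) (hyx ▸ hx)
  · exact append_cancel_right ((rotate_length (P ++ [x])).symm.trans (by simpa using hrot))

lemma nodup_flatMap_cyclicPermutations {α : Type*} {L : List (List α)} {x : α} (hL : L.Nodup)
    (h : ∀ P ∈ L, (P ++ [x]).Nodup) :
    (L.flatMap fun P => (P ++ [x]).cyclicPermutations).Nodup := by
  refine nodup_flatMap.mpr ⟨fun P hP => (h P hP).cyclicPermutations, ?_⟩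
  refine hL.imp_of_mem fun {P P'} hP _ hne w hw hw' => hne ?_
  have hx : x ∉ P := fun hxP => (nodup_append.mp (h P hP)).2.2 x hxP x (mem_singleton_self x) rfl
  exact eq_of_isRotated_append_singleton hx
    ((mem_cyclicPermutations_iff.mp hw).symm.trans (mem_cyclicPermutations_iff.mp hw'))

lemma permsOrder_Mrec_succ {n : ℕ} (hn : 1 ≤ n) :
    permsOrder (n + 1) (Mrec (n + 1)) =
      (permsOrder n (Mrec n)).flatMap fun P => (P ++ [n + 1]).cyclicPermutations := by
  obtain ⟨m, rfl⟩ : ∃ m, n = m + 1 := ⟨n - 1, by omega⟩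
  set L := permsOrder (m + 1) (Mrec (m + 1))
  have hL : L.Nodup := nodup_reverse.mpr (nodup_dedup _)
  have hperm : ∀ P ∈ L, P ~ range' 1 (m + 1) := fun P hP => perm_of_mem_permsOrder hP
  have hMrec : Mrec (m + 2) = L.foldl (fun s P => mergeOv s (P ++ [m + 2] ++ P)) [] := by
    rw [Mrec, foldl_map]
  have hwin : permWindows (m + 2) (Mrec (m + 2)) =
      L.flatMap fun P => (P ++ [m + 2]).cyclicPermutations := by
    rw [hMrec, permWindows_foldl_mergeOv L hL hperm [] (by simp)
      (fun h => by simpa using (hperm _ h).length_eq)]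
    simp [permWindows, windows]
  have hnodup : (permWindows (m + 2) (Mrec (m + 2))).Nodup := by
    refine hwin ▸ nodup_flatMap_cyclicPermutations hL fun P hP => ?_
    have hP := (hperm P hP).append_right [m + 2]
    rw [← range'_one_succ] at hP
    exact hP.nodup_iff.mpr nodup_range'
  rw [permsOrder_eq_permWindows hnodup, hwin]

lemma map_formPerm_pow {α : Type*} [DecidableEq α] {l : List α} (h : l.Nodup) (u : ℕ) :
    l.map ⇑(l.formPerm ^ u) = l.rotate u :=
  ext_getElem (by simp) fun i h₁ _ => by
    rw [getElem_map, formPerm_pow_apply_getElem l h u i (by simpa using h₁), getElem_rotate]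

lemma circProd_apply_of_lt {n x : ℕ} (d : ℕ → ℕ) (h : n < x) : circProd n d x = x := by
  have hmem : circProd n d ∈ MulAction.stabilizer (Equiv.Perm ℕ) x := by
    refine (MulAction.stabilizer _ x).list_prod_mem fun σ hσ => ?_
    obtain ⟨i, hi, rfl⟩ := mem_map.mp hσ
    refine Subgroup.pow_mem _ (formPerm_apply_of_notMem ?_) _
    simp only [mem_range'_1] at hi ⊢
    omega
  exact hmem

lemma circProd_succ {n : ℕ} (hn : 1 ≤ n) (d : ℕ → ℕ) :
    circProd (n + 1) d = circProd n d * pcyc (n + 1) ^ d (n + 1) := by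
  rw [circProd, circProd, show n + 1 - 1 = n - 1 + 1 by omega, range'_concat,
    show 2 + 1 * (n - 1) = n + 1 by omega, map_append, prod_append, map_singleton, prod_singleton]

lemma map_circProd_succ {n : ℕ} (hn : 1 ≤ n) (d : ℕ → ℕ) :
    (range' 1 (n + 1)).map ⇑(circProd (n + 1) d) =
      ((range' 1 n).map ⇑(circProd n d) ++ [n + 1]).rotate (d (n + 1)) := by
  rw [circProd_succ hn, Equiv.Perm.coe_mul, ← map_map, pcyc, map_formPerm_pow nodup_range',
    map_rotate, range'_one_succ, map_append, map_singleton,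
    circProd_apply_of_lt d (Nat.lt_succ_self n)]

lemma getElem?_flatMap_of_length_eq {α β : Type*} {k : ℕ} (L : List α) (f : α → List β)
    (hf : ∀ a ∈ L, (f a).length = k) (q : ℕ) {r : ℕ} (hr : r < k) :
    (L.flatMap f)[k * q + r]? = L[q]?.bind fun a => (f a)[r]? := by
  induction L generalizing q with
  | nil => simp
  | cons a L ih =>
    have ha := hf a mem_cons_self
    rw [flatMap_cons]
    cases q with
    | zero => simp [getElem?_append_left (show r < (f a).length by omega)]
    | succ q =>
      rw [show k * (q + 1) + r = (f a).length + (k * q + r) by rw [ha]; ring,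
        getElem?_append_right (Nat.le_add_right _ _), Nat.add_sub_cancel_left,
        ih (fun b hb => hf b (mem_cons_of_mem _ hb))]
      simp

lemma sum_Icc_mul_factorial_div_succ {n : ℕ} (hn : 1 ≤ n) (d : ℕ → ℕ) :
    ∑ i ∈ Finset.Icc 2 (n + 1), d i * ((n + 1)! / i !) =
      (n + 1) * ∑ i ∈ Finset.Icc 2 n, d i * (n ! / i !) + d (n + 1) := by
  rw [Finset.sum_Icc_succ_top (by omega), Nat.div_self (Nat.factorial_pos _), mul_one,
    Finset.mul_sum]
  congr 1
  refine Finset.sum_congr rfl fun i hi => ?_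
  rw [Nat.factorial_succ,
    Nat.mul_div_assoc _ (Nat.factorial_dvd_factorial (Finset.mem_Icc.mp hi).2)]
  ring

theorem getElem?_permsOrder_Mrec :
    ∀ (n : ℕ) (d : ℕ → ℕ), (∀ i ∈ Finset.Icc 2 n, d i < i) →
    (permsOrder n (Mrec n))[∑ i ∈ Finset.Icc 2 n, d i * (n ! / i !)]? =
      some ((range' 1 n).map ⇑(circProd n d))
  | 0, _, _ => rfl
  | 1, _, _ => rfl
  | n + 2, d, hd => by
    have ih := getElem?_permsOrder_Mrec (n + 1) d fun i hi =>
      hd i (Finset.Icc_subset_Icc_right (by omega) hi)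
    have hlen : ∀ P ∈ permsOrder (n + 1) (Mrec (n + 1)),
        (P ++ [n + 1 + 1]).cyclicPermutations.length = n + 2 := fun P hP => by
      simp [(perm_of_mem_permsOrder hP).length_eq]
    have hdn : d (n + 2) < n + 2 := hd (n + 2) (by simp)
    rw [sum_Icc_mul_factorial_div_succ (by omega), permsOrder_Mrec_succ (by omega),
      getElem?_flatMap_of_length_eq _ _ hlen _ hdn, ih, Option.bind_some,
      getElem?_eq_getElem (by simp; omega), getElem_cyclicPermutations,
      ← map_circProd_succ (by omega)]

theorem stmt9_general (n : ℕ) (j : ℕ) (d : ℕ → ℕ)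
    (hd : ∀ i ∈ Finset.Icc 2 n, d i < i)
    (hsum : j = ∑ i ∈ Finset.Icc 2 n, d i * (Nat.factorial n / Nat.factorial i)) :
    (permsOrder n (Mrec n))[j]? = some ((List.range' 1 n).map fun x => circProd n d x) :=
  hsum ▸ getElem?_permsOrder_Mrec n d hd

theorem stmt9 (n : ℕ) (hn : 1 ≤ n) (j : ℕ) (hj : j < Nat.factorial n) (d : ℕ → ℕ)
    (hd : ∀ i ∈ Finset.Icc 2 n, d i < i)
    (hsum : j = ∑ i ∈ Finset.Icc 2 n, d i * (Nat.factorial n / Nat.factorial i)) :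
    (permsOrder n (Mrec n))[j]? = some ((List.range' 1 n).map fun x => circProd n d x) :=
  stmt9_general n j d hd hsum
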